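/- arXiv:2508.20450 — 5 statements merged into one kernel-verified Lean document; each statement's English description precedes it below -/
import Mathlib

section
/- Let d ∈ ℕ, τ₀,…,τ_d > 0, s = τ₀²+⋯+τ_d², and let v₀,…,v_d ∈ ℝ^d be in orthocentric position with parameters τ₀,…,τ_d. For κ < 0, the simplex [v₀,…,v_d] is contained in the open ball of radius 1/√(−κ) centered at 0 if and only if κ > κ₀, where κ₀ = −min_{0≤j≤d} τ_j² s/(s − τ_j²). Moreover κ₀ < 0. -/
open Finset

/-- The simplex spanned by vectors in orthocentric position is contained in the
Klein-model ball of curvature `κ < 0` if and only if `κ > κ₀`, where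
`κ₀ = -min_j τ_j² s / (s - τ_j²) < 0`. -/
theorem simplex_in_klein_ball_iff
    (d : ℕ) (hd : 1 ≤ d) (τ : Fin (d + 1) → ℝ) (hτ : ∀ j, 0 < τ j)
    (s : ℝ) (hs : s = ∑ j, τ j ^ 2)
    (v : Fin (d + 1) → EuclideanSpace ℝ (Fin d))
    (horth : ∀ j k, j ≠ k → inner ℝ (v j) (v k) = (-1 / s : ℝ))
    (hnorm : ∀ j, ‖v j‖ ^ 2 = -1 / s + 1 / τ j ^ 2)
    (κ₀ : ℝ) (hκ₀ : κ₀ = -(⨅ j, τ j ^ 2 * s / (s - τ j ^ 2))) :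
    κ₀ < 0 ∧
    ∀ κ : ℝ, κ < 0 →
      (convexHull ℝ (Set.range v) ⊆ Metric.ball 0 (1 / Real.sqrt (-κ)) ↔ κ₀ < κ) := by
  set f : Fin (d + 1) → ℝ := fun j => τ j ^ 2 * s / (s - τ j ^ 2) with hf
  have hs0 : 0 < s := by
    rw [hs]
    exact Finset.sum_pos (fun j _ => pow_pos (hτ j) 2) ⟨0, mem_univ 0⟩
  have hsub : ∀ j, 0 < s - τ j ^ 2 := by
    intro j
    have herase : ∑ k ∈ univ.erase j, τ k ^ 2 + τ j ^ 2 = s := by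
      rw [hs]; exact Finset.sum_erase_add _ _ (mem_univ j)
    have hne : (univ.erase j).Nonempty := by
      rw [← Finset.card_pos, Finset.card_erase_of_mem (mem_univ j), Finset.card_univ,
        Fintype.card_fin]
      omega
    have hpos : 0 < ∑ k ∈ univ.erase j, τ k ^ 2 :=
      Finset.sum_pos (fun k _ => pow_pos (hτ k) 2) hne
    linarith
  have hfpos : ∀ j, 0 < f j := fun j =>
    div_pos (mul_pos (pow_pos (hτ j) 2) hs0) (hsub j)
  have hnorm2 : ∀ j, ‖v j‖ ^ 2 = 1 / f j := by
    intro j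
    rw [hnorm j, hf]
    have hτ0 : τ j ^ 2 ≠ 0 := (pow_pos (hτ j) 2).ne'
    have hsne : s ≠ 0 := hs0.ne'
    have hsubne : s - τ j ^ 2 ≠ 0 := (hsub j).ne'
    field_simp
    rw [sub_div, div_self hτ0]
    ring
  obtain ⟨j₀, hj₀⟩ := Finite.exists_min f
  have hinf : (⨅ j, f j) = f j₀ :=
    le_antisymm (ciInf_le (Finite.bddBelow_range f) j₀) (le_ciInf hj₀)
  have hκ₀' : κ₀ = -f j₀ := by rw [hκ₀, hinf]
  refine ⟨by rw [hκ₀']; linarith [hfpos j₀], ?_⟩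
  intro κ hκ
  have hκpos : 0 < -κ := by linarith
  have hsq : 0 < Real.sqrt (-κ) := Real.sqrt_pos.mpr hκpos
  have hR : (0:ℝ) < 1 / Real.sqrt (-κ) := by positivity
  have hhull : convexHull ℝ (Set.range v) ⊆ Metric.ball 0 (1 / Real.sqrt (-κ)) ↔
      ∀ j, ‖v j‖ < 1 / Real.sqrt (-κ) := by
    constructor
    · intro h j
      have := h (subset_convexHull ℝ _ (Set.mem_range_self j))
      rwa [mem_ball_zero_iff] at this
    · intro h
      refine convexHull_min ?_ (convex_ball 0 _)
      rintro x ⟨j, rfl⟩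
      exact mem_ball_zero_iff.mpr (h j)
  have hper : ∀ j, ‖v j‖ < 1 / Real.sqrt (-κ) ↔ -κ < f j := by
    intro j
    rw [show ‖v j‖ < 1 / Real.sqrt (-κ) ↔ ‖v j‖ ^ 2 < (1 / Real.sqrt (-κ)) ^ 2 from
      (pow_lt_pow_iff_left₀ (norm_nonneg _) hR.le two_ne_zero).symm]
    rw [div_pow, one_pow, Real.sq_sqrt hκpos.le, hnorm2 j]
    exact one_div_lt_one_div (hfpos j) hκpos
  rw [hhull]
  constructor
  · intro h
    rw [hκ₀', neg_lt]
    exact (hper j₀).mp (h j₀)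
  · intro h j
    rw [hκ₀', neg_lt] at h
    exact (hper j).mpr (lt_of_lt_of_le h (hj₀ j))
end

section
/- Let d ∈ ℕ, τ₀,…,τ_d > 0, s = Σ τ_j², and let v₀,…,v_d ∈ ℝ^d be in orthocentric position with parameters τ₀,…,τ_d. Let κ ∈ (κ₀, 0) where κ₀ = −min_j τ_j² s/(s−τ_j²). Then for all 0 ≤ j ≠ k ≤ d, (−κ)(1/(−κ) − ⟨v_j,v_k⟩)/(√(1+κ‖v_j‖²)·√(1+κ‖v_k‖²)) = (s−κ)/(√(s−κ+κs/τ_j²)·√(s−κ+κs/τ_k²)), and this quantity is ≥ 1; hence the hyperbolic distance between v_j and v_k in the Klein model of curvature κ equals (1/√(−κ))·arccosh((s−κ)/(√(s−κ+κs/τ_j²)·√(s−κ+κs/τ_k²))). -/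
open Finset

/-- The inverse hyperbolic cosine. -/
noncomputable def arcosh (x : ℝ) : ℝ := Real.log (x + Real.sqrt (x ^ 2 - 1))

/-- Hyperbolic side lengths of an orthocentric simplex in the Klein model of
curvature `κ ∈ (κ₀, 0)`. -/
theorem hyperbolic_side_lengths_orthocentric
    (d : ℕ) (hd : 1 ≤ d) (τ : Fin (d + 1) → ℝ) (hτ : ∀ j, 0 < τ j)
    (s : ℝ) (hs : s = ∑ j, τ j ^ 2)
    (v : Fin (d + 1) → EuclideanSpace ℝ (Fin d))
    (horth : ∀ j k, j ≠ k → inner ℝ (v j) (v k) = (-1 / s : ℝ))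
    (hnorm : ∀ j, ‖v j‖ ^ 2 = -1 / s + 1 / τ j ^ 2)
    (κ₀ : ℝ) (hκ₀ : κ₀ = -(⨅ j, τ j ^ 2 * s / (s - τ j ^ 2)))
    (κ : ℝ) (hκ : κ₀ < κ ∧ κ < 0) :
    ∀ j k, j ≠ k →
      (-κ) * (1 / (-κ) - inner ℝ (v j) (v k)) /
          (Real.sqrt (1 + κ * ‖v j‖ ^ 2) * Real.sqrt (1 + κ * ‖v k‖ ^ 2))
        = (s - κ) /
          (Real.sqrt (s - κ + κ * s / τ j ^ 2) * Real.sqrt (s - κ + κ * s / τ k ^ 2)) ∧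
      1 ≤ (s - κ) /
          (Real.sqrt (s - κ + κ * s / τ j ^ 2) * Real.sqrt (s - κ + κ * s / τ k ^ 2)) ∧
      (1 / Real.sqrt (-κ)) * arcosh
          ((-κ) * (1 / (-κ) - inner ℝ (v j) (v k)) /
            (Real.sqrt (1 + κ * ‖v j‖ ^ 2) * Real.sqrt (1 + κ * ‖v k‖ ^ 2)))
        = (1 / Real.sqrt (-κ)) * arcosh
          ((s - κ) /
            (Real.sqrt (s - κ + κ * s / τ j ^ 2) * Real.sqrt (s - κ + κ * s / τ k ^ 2))) := by
  obtain ⟨hκ₀κ, hκneg⟩ := hκ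
  have hτ2 : ∀ j, 0 < τ j ^ 2 := fun j => pow_pos (hτ j) 2
  have hspos : 0 < s := by
    rw [hs]; exact Finset.sum_pos (fun j _ => hτ2 j) Finset.univ_nonempty
  have hlt : ∀ j, τ j ^ 2 < s := by
    intro j
    have h1 : s = τ j ^ 2 + ∑ k ∈ univ.erase j, τ k ^ 2 := by
      rw [hs, ← Finset.add_sum_erase _ _ (mem_univ j)]
    have h2 : 0 < ∑ k ∈ univ.erase j, τ k ^ 2 := by
      apply Finset.sum_pos (fun k _ => hτ2 k)
      obtain ⟨k, hk⟩ : ∃ k : Fin (d + 1), k ≠ j :=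
        Fintype.exists_ne_of_one_lt_card (by simp; omega) j
      exact ⟨k, Finset.mem_erase.mpr ⟨hk, mem_univ k⟩⟩
    linarith
  have hA : ∀ j, 0 < s - κ + κ * s / τ j ^ 2 := by
    intro j
    have hinf : ⨅ i, τ i ^ 2 * s / (s - τ i ^ 2) ≤ τ j ^ 2 * s / (s - τ j ^ 2) :=
      ciInf_le (Finite.bddBelow_range _) j
    have hκj : -κ < τ j ^ 2 * s / (s - τ j ^ 2) := by
      rw [hκ₀] at hκ₀κ; linarith
    have hden : 0 < s - τ j ^ 2 := by linarith [hlt j]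
    have hmul : (-κ) * (s - τ j ^ 2) < τ j ^ 2 * s := (lt_div_iff₀ hden).mp hκj
    have hnum : 0 < (s - κ) * τ j ^ 2 + κ * s := by nlinarith
    have hτne : (τ j ^ 2 : ℝ) ≠ 0 := (hτ2 j).ne'
    have heq : s - κ + κ * s / τ j ^ 2 = ((s - κ) * τ j ^ 2 + κ * s) / τ j ^ 2 := by
      rw [eq_div_iff hτne, add_mul, div_mul_cancel₀ _ hτne]
    rw [heq]
    exact div_pos hnum (hτ2 j)
  have hAle : ∀ j, s - κ + κ * s / τ j ^ 2 ≤ s - κ := by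
    intro j
    have : κ * s / τ j ^ 2 < 0 :=
      div_neg_of_neg_of_pos (mul_neg_of_neg_of_pos hκneg hspos) (hτ2 j)
    linarith
  have hsκ : 0 < s - κ := by linarith
  intro j k hjk
  have key : (-κ) * (1 / (-κ) - inner ℝ (v j) (v k)) /
      (Real.sqrt (1 + κ * ‖v j‖ ^ 2) * Real.sqrt (1 + κ * ‖v k‖ ^ 2))
      = (s - κ) /
      (Real.sqrt (s - κ + κ * s / τ j ^ 2) * Real.sqrt (s - κ + κ * s / τ k ^ 2)) := by
    rw [horth j k hjk, hnorm j, hnorm k]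
    have hden : ∀ i, 1 + κ * (-1 / s + 1 / τ i ^ 2) = (s - κ + κ * s / τ i ^ 2) / s := by
      intro i
      field_simp
      ring
    rw [hden j, hden k, Real.sqrt_div (hA j).le, Real.sqrt_div (hA k).le]
    have hκne : κ ≠ 0 := hκneg.ne
    have hnum : (-κ) * (1 / (-κ) - (-1 / s)) = (s - κ) / s := by
      have hκne' : -κ ≠ 0 := neg_ne_zero.mpr hκne
      rw [eq_div_iff hspos.ne']
      field_simp
      ring
    rw [hnum]
    have hss : Real.sqrt s ≠ 0 := ne_of_gt (Real.sqrt_pos.mpr hspos)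
    have hs2 : Real.sqrt s * Real.sqrt s = s := Real.mul_self_sqrt hspos.le
    have hAj : Real.sqrt (s - κ + κ * s / τ j ^ 2) ≠ 0 :=
      ne_of_gt (Real.sqrt_pos.mpr (hA j))
    have hAk : Real.sqrt (s - κ + κ * s / τ k ^ 2) ≠ 0 :=
      ne_of_gt (Real.sqrt_pos.mpr (hA k))
    field_simp
    rw [Real.sq_sqrt hspos.le]
  have hge : 1 ≤ (s - κ) /
      (Real.sqrt (s - κ + κ * s / τ j ^ 2) * Real.sqrt (s - κ + κ * s / τ k ^ 2)) := by
    have hdp : 0 < Real.sqrt (s - κ + κ * s / τ j ^ 2) *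
        Real.sqrt (s - κ + κ * s / τ k ^ 2) :=
      mul_pos (Real.sqrt_pos.mpr (hA j)) (Real.sqrt_pos.mpr (hA k))
    rw [one_le_div hdp]
    calc Real.sqrt (s - κ + κ * s / τ j ^ 2) * Real.sqrt (s - κ + κ * s / τ k ^ 2)
        ≤ Real.sqrt (s - κ) * Real.sqrt (s - κ) := by
          gcongr <;> [exact hAle j; exact hAle k]
      _ = s - κ := Real.mul_self_sqrt hsκ.le
  exact ⟨key, hge, by rw [key]⟩
end

section
/- Let d ∈ ℕ and let A ⊆ ℝ^d be compact with A contained in the open ball of radius 1/√(−κ₀') for every κ₀' < κ₀ := inf{κ ∈ ℝ : A ⊆ B^d(κ)}. Then the function V(κ) := ∫_A (1 + κ‖y‖²)^{−(d+1)/2} dy is well defined and holomorphic in κ on the domain ℂ ∖ (−∞, κ₀]. -/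
open MeasureTheory

private lemma slit_aux {d : ℕ} {A : Set (EuclideanSpace ℝ (Fin d))}
    {κ₀ : ℝ}
    (hκ₀ : κ₀ = sInf {κ : ℝ | ∀ y ∈ A, κ < 0 → ‖y‖ < 1 / Real.sqrt (-κ)})
    {κ : ℂ} (hκ : ¬(κ.im = 0 ∧ κ.re ≤ κ₀)) {y : EuclideanSpace ℝ (Fin d)} (hy : y ∈ A) :
    ((1 : ℂ) + κ * (‖y‖ ^ 2 : ℝ)) ∈ Complex.slitPlane := by
  rw [Complex.mem_slitPlane_iff]
  push_neg at hκ
  by_cases him : κ.im = 0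
  · left
    have hre : κ₀ < κ.re := hκ him
    simp only [Complex.add_re, Complex.one_re, Complex.mul_re, Complex.ofReal_re,
      Complex.ofReal_im, him, zero_mul, mul_zero, sub_zero]
    rcases le_or_gt 0 κ.re with h0 | h0
    · positivity
    · -- κ₀ < κ.re < 0 : use the sInf characterization
      set S : Set ℝ := {κ : ℝ | ∀ y ∈ A, κ < 0 → ‖y‖ < 1 / Real.sqrt (-κ)} with hS
      have hne : S.Nonempty := ⟨0, fun y _ h => absurd h (lt_irrefl 0)⟩
      by_cases hbdd : BddBelow S
      · have : sInf S < κ.re := hκ₀ ▸ hre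
        obtain ⟨κ'', hκ''S, hκ''lt⟩ := (csInf_lt_iff hbdd hne).mp this
        have hκ''neg : κ'' < 0 := hκ''lt.trans h0
        have h1 : ‖y‖ < 1 / Real.sqrt (-κ'') := hκ''S y hy hκ''neg
        have h2 : (1 : ℝ) / Real.sqrt (-κ'') ≤ 1 / Real.sqrt (-κ.re) := by
          apply one_div_le_one_div_of_le
          · exact Real.sqrt_pos.mpr (by linarith)
          · exact Real.sqrt_le_sqrt (by linarith)
        have h3 : ‖y‖ < 1 / Real.sqrt (-κ.re) := h1.trans_le h2
        have hs : Real.sqrt (-κ.re) > 0 := Real.sqrt_pos.mpr (by linarith)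
        have h4 : ‖y‖ ^ 2 < (1 / Real.sqrt (-κ.re)) ^ 2 := by
          apply pow_lt_pow_left₀ h3 (norm_nonneg y) (by norm_num)
        have h5 : (1 / Real.sqrt (-κ.re)) ^ 2 = 1 / (-κ.re) := by
          rw [div_pow, one_pow, Real.sq_sqrt (by linarith)]
        rw [h5] at h4
        have h6 : κ.re * ‖y‖ ^ 2 > κ.re * (1 / (-κ.re)) := by
          exact mul_lt_mul_of_neg_left h4 h0
        have h7 : κ.re * (1 / (-κ.re)) = -1 := by
          rw [mul_one_div, div_neg, div_self h0.ne]
        linarith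
      · exfalso
        rw [hκ₀, hS, Real.sInf_of_not_bddBelow hbdd] at hre
        linarith
  · by_cases hy0 : ‖y‖ = 0
    · left
      simp [hy0]
    · right
      simp only [Complex.add_im, Complex.one_im, Complex.mul_im, Complex.ofReal_re,
        Complex.ofReal_im, mul_zero, add_zero, zero_add]
      exact mul_ne_zero him (by positivity)

/-- The (spherical/hyperbolic) volume of a compact set `A ⊆ ℝ^d`, as a function of the
curvature `κ`, is well defined and holomorphic on `ℂ ∖ (-∞, κ₀]`. -/
theorem volume_function_holomorphic
    (d : ℕ) (A : Set (EuclideanSpace ℝ (Fin d))) (hA : IsCompact A)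
    (κ₀ : ℝ)
    (hκ₀ : κ₀ = sInf {κ : ℝ | ∀ y ∈ A, κ < 0 → ‖y‖ < 1 / Real.sqrt (-κ)})
    (hball : ∀ κ' < κ₀, ∀ y ∈ A, ‖y‖ < 1 / Real.sqrt (-κ'))
    (V : ℂ → ℂ)
    (hV : V = fun κ => ∫ y in A, ((1 : ℂ) + κ * (‖y‖ ^ 2 : ℝ)) ^ (-((d : ℂ) + 1) / 2)) :
    (∀ κ : ℂ, ¬(κ.im = 0 ∧ κ.re ≤ κ₀) →
      IntegrableOn (fun y => ((1 : ℂ) + κ * (‖y‖ ^ 2 : ℝ)) ^ (-((d : ℂ) + 1) / 2)) A volume) ∧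
    DifferentiableOn ℂ V {κ : ℂ | ¬(κ.im = 0 ∧ κ.re ≤ κ₀)} := by
  set w : ℂ := -((d : ℂ) + 1) / 2 with hw
  set U : Set ℂ := {κ : ℂ | ¬(κ.im = 0 ∧ κ.re ≤ κ₀)} with hU
  have hAmeas : MeasurableSet A := hA.isClosed.measurableSet
  have hUopen : IsOpen U := by
    rw [hU]
    have : {κ : ℂ | κ.im = 0 ∧ κ.re ≤ κ₀} =
        (Complex.im ⁻¹' {0}) ∩ (Complex.re ⁻¹' Set.Iic κ₀) := rfl
    have hclosed : IsClosed {κ : ℂ | κ.im = 0 ∧ κ.re ≤ κ₀} := by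
      rw [this]
      exact (isClosed_singleton.preimage Complex.continuous_im).inter
        (isClosed_Iic.preimage Complex.continuous_re)
    exact hclosed.isOpen_compl
  -- continuity of the integrand in y, for fixed κ ∈ U
  have hcont : ∀ κ ∈ U, ContinuousOn
      (fun y : EuclideanSpace ℝ (Fin d) => ((1 : ℂ) + κ * (‖y‖ ^ 2 : ℝ)) ^ w) A := by
    intro κ hκ y hy
    apply ContinuousAt.continuousWithinAt
    have hg : ContinuousAt
        (fun y : EuclideanSpace ℝ (Fin d) => (1 : ℂ) + κ * (‖y‖ ^ 2 : ℝ)) y := by fun_prop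
    exact hg.cpow continuousAt_const (slit_aux hκ₀ hκ hy)
  have hint : ∀ κ ∈ U, IntegrableOn
      (fun y => ((1 : ℂ) + κ * (‖y‖ ^ 2 : ℝ)) ^ w) A volume := by
    intro κ hκ
    exact (hcont κ hκ).integrableOn_compact hA
  refine ⟨fun κ hκ => hint κ hκ, ?_⟩
  intro z hz
  have hzU : z ∈ U := hz
  obtain ⟨ε, hε, hεU⟩ : ∃ ε > 0, Metric.closedBall z ε ⊆ U :=
    (Metric.nhds_basis_closedBall.mem_iff).mp (hUopen.mem_nhds hzU)
  -- derivative in κ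
  set F' : ℂ → EuclideanSpace ℝ (Fin d) → ℂ := fun κ y =>
    w * ((1 : ℂ) + κ * (‖y‖ ^ 2 : ℝ)) ^ (w - 1) * (‖y‖ ^ 2 : ℝ) with hF'
  have hderiv : ∀ y ∈ A, ∀ κ ∈ Metric.ball z ε,
      HasDerivAt (fun κ : ℂ => ((1 : ℂ) + κ * (‖y‖ ^ 2 : ℝ)) ^ w) (F' κ y) κ := by
    intro y hy κ hκ
    have hκU : κ ∈ U := hεU (Metric.ball_subset_closedBall hκ)
    have h1 : HasDerivAt (fun κ : ℂ => (1 : ℂ) + κ * (‖y‖ ^ 2 : ℝ))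
        ((‖y‖ ^ 2 : ℝ) : ℂ) κ := by
      exact (hasDerivAt_mul_const _).const_add 1
    exact h1.cpow_const (slit_aux hκ₀ hκU hy)
  -- continuity of F' on closedBall × A, hence bounded
  have hF'cont : ContinuousOn (fun p : ℂ × EuclideanSpace ℝ (Fin d) => F' p.1 p.2)
      (Metric.closedBall z ε ×ˢ A) := by
    intro p hp
    apply ContinuousAt.continuousWithinAt
    have hslit := slit_aux hκ₀ (hεU hp.1) hp.2
    apply ContinuousAt.mul
    · apply ContinuousAt.mul continuousAt_const
      have hg : ContinuousAt
          (fun q : ℂ × EuclideanSpace ℝ (Fin d) => (1 : ℂ) + q.1 * (‖q.2‖ ^ 2 : ℝ)) p := by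
        fun_prop
      exact hg.cpow continuousAt_const hslit
    · fun_prop
  obtain ⟨C, hC⟩ : ∃ C, ∀ p ∈ Metric.closedBall z ε ×ˢ A,
      ‖F' p.1 p.2‖ ≤ C := by
    rcases ((isCompact_closedBall z ε).prod hA).exists_bound_of_continuousOn
      hF'cont with ⟨C, hC⟩
    exact ⟨C, hC⟩
  have key := hasDerivAt_integral_of_dominated_loc_of_deriv_le (μ := volume.restrict A)
    (F := fun κ y => ((1 : ℂ) + κ * (‖y‖ ^ 2 : ℝ)) ^ w) (F' := F') (x₀ := z)
    (bound := fun _ => C) (Metric.ball_mem_nhds z hε)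
    (by
      filter_upwards [hUopen.mem_nhds hzU] with κ hκ
      exact ((hcont κ hκ).aestronglyMeasurable hAmeas))
    (hint z hzU)
    (by
      have : ContinuousOn (F' z) A := by
        intro y hy
        exact (hF'cont.comp (Continuous.continuousOn (by fun_prop))
          (fun y hy => Set.mk_mem_prod (Metric.mem_closedBall_self hε.le) hy)) y hy
      exact this.aestronglyMeasurable hAmeas)
    (by
      rw [ae_restrict_iff' hAmeas]
      apply ae_of_all
      intro y hy κ hκ
      exact hC (κ, y) (Set.mk_mem_prod (Metric.ball_subset_closedBall hκ) hy))
    (integrableOn_const hA.measure_lt_top.ne)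
    (by
      rw [ae_restrict_iff' hAmeas]
      apply ae_of_all
      intro y hy κ hκ
      exact hderiv y hy κ hκ)
  have hd : HasDerivAt V (∫ y in A, F' z y) z := by
    rw [hV]
    exact key.2
  exact hd.differentiableAt.differentiableWithinAt
end

section
/- Let A ⊆ ℝ^d be compact, κ₀ := inf{κ ∈ ℝ : A ⊆ B^d(κ)}, and let K ⊆ ℂ ∖ (−∞, κ₀] be compact. Then there exists c > 0 such that |1 + κ‖y‖²| ≥ c for all κ ∈ K and all y ∈ A. -/
open MeasureTheory

/-- Uniform lower bound for `|1 + κ‖y‖²|` on compact sets `K ⊆ ℂ ∖ (-∞, κ₀]` and `y ∈ A`. -/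
theorem uniform_lower_bound_one_add_kappa_norm_sq
    (d : ℕ) (A : Set (EuclideanSpace ℝ (Fin d))) (hA : IsCompact A)
    (κ₀ : ℝ)
    (hκ₀ : κ₀ = sInf {κ : ℝ | ∀ y ∈ A, κ < 0 → ‖y‖ < 1 / Real.sqrt (-κ)})
    (K : Set ℂ) (hK : IsCompact K)
    (hKdom : ∀ κ ∈ K, ¬(κ.im = 0 ∧ κ.re ≤ κ₀)) :
    ∃ c > 0, ∀ κ ∈ K, ∀ y ∈ A, c ≤ ‖(1 + κ * (‖y‖ ^ 2 : ℝ) : ℂ)‖ := by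
  -- continuous function
  set g : ℂ × EuclideanSpace ℝ (Fin d) → ℝ :=
    fun p => ‖(1 + p.1 * ((‖p.2‖ : ℝ) ^ 2 : ℝ) : ℂ)‖ with hg
  have hgc : Continuous g := by
    apply continuous_norm.comp
    continuity
  rcases (K ×ˢ A).eq_empty_or_nonempty with he | hne
  · refine ⟨1, one_pos, fun κ hκ y hy => ?_⟩
    exact absurd (Set.mk_mem_prod hκ hy) (by simp [he])
  · obtain ⟨p, hp, hmin⟩ := (hK.prod hA).exists_isMinOn hne hgc.continuousOn
    have h0 : (0:ℝ) ≤ g p := by rw [hg]; exact norm_nonneg _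
    have hpos : 0 < g p := by
      rcases lt_or_eq_of_le h0 with h | h
      · exact h
      exfalso
      have hz : (1 : ℂ) + p.1 * ((‖p.2‖ ^ 2 : ℝ) : ℂ) = 0 := by
        have h' : ‖(1 + p.1 * ((‖p.2‖ ^ 2 : ℝ) : ℂ) : ℂ)‖ = 0 := by
          rw [hg] at h; exact h.symm
        exact norm_eq_zero.mp h'
      have hyA : p.2 ∈ A := hp.2
      have hκK : p.1 ∈ K := hp.1
      have hny : ‖p.2‖ ≠ 0 := by
        intro h0'
        rw [h0'] at hz
        norm_num at hz
      have hnpos : (0:ℝ) < ‖p.2‖ := lt_of_le_of_ne (norm_nonneg _) (Ne.symm hny)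
      have hr : (‖p.2‖ ^ 2 : ℝ) ≠ 0 := by positivity
      have hrr : ((‖p.2‖ ^ 2 : ℝ) : ℂ) ≠ 0 := by exact_mod_cast hr
      have hmul : ((-(1 / ‖p.2‖ ^ 2) : ℝ) : ℂ) * ((‖p.2‖ ^ 2 : ℝ) : ℂ) = -1 := by
        rw [← Complex.ofReal_mul, ← Complex.ofReal_one, ← Complex.ofReal_neg]
        norm_cast
        field_simp
        simp
      have hκeq : p.1 = ((-(1 / ‖p.2‖ ^ 2) : ℝ) : ℂ) :=
        mul_right_cancel₀ hrr (by rw [hmul]; linear_combination hz)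
      apply hKdom p.1 hκK
      rw [hκeq]
      refine ⟨Complex.ofReal_im _, ?_⟩
      simp only [Complex.ofReal_re]
      rw [hκ₀]
      apply le_csInf
      · exact ⟨0, fun y hy h0 => absurd h0 (by norm_num)⟩
      · intro b hb
        by_contra hlt
        push_neg at hlt
        have hb0 : b < 0 := by
          have : (0:ℝ) < 1 / ‖p.2‖ ^ 2 := by positivity
          linarith
        have hlt2 := hb p.2 hyA hb0
        have hs : Real.sqrt (-b) * Real.sqrt (-b) = -b :=
          Real.mul_self_sqrt (by linarith)
        have hspos : 0 < Real.sqrt (-b) := Real.sqrt_pos.mpr (by linarith)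
        have h1 : ‖p.2‖ * Real.sqrt (-b) < 1 := by
          rw [div_eq_inv_mul, mul_one] at hlt2
          calc ‖p.2‖ * Real.sqrt (-b) < (Real.sqrt (-b))⁻¹ * Real.sqrt (-b) :=
                mul_lt_mul_of_pos_right hlt2 hspos
            _ = 1 := inv_mul_cancel₀ (ne_of_gt hspos)
        have hprod : 0 ≤ ‖p.2‖ * Real.sqrt (-b) := by positivity
        have h2 : ‖p.2‖ ^ 2 * (-b) < 1 := by
          nlinarith [mul_le_mul_of_nonneg_left h1.le hprod, hs, h1]
        have h3 : -(1 / ‖p.2‖ ^ 2) < b := by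
          rw [neg_div']
          rw [div_lt_iff₀ (by positivity)]
          nlinarith
        linarith
    refine ⟨g p, hpos, fun κ hκ y hy => ?_⟩
    have := isMinOn_iff.mp hmin (κ, y) (Set.mk_mem_prod hκ hy)
    simpa [hg] using this
end

section
/- Let d ∈ ℕ, μ₀,…,μ_d ∈ ℝ∖{0}, and z > 0 real. Then the value of the improper integral lim_{B→∞} ∫₀^B ∏_{j=0}^d Φ(μ_j √z ω y)·e^{−ω²y²/2}·ω dy is the same for every ω ∈ ℂ∖{0} with |arg ω| ≤ π/4; in particular it equals the real integral ∫₀^∞ ∏_{j=0}^d Φ(μ_j √z x)·e^{−x²/2} dx. -/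
open MeasureTheory Filter Finset

/-- The entire extension of the standard normal distribution function. -/
noncomputable def Phi (z : ℂ) : ℂ :=
  1 / 2 + (Real.sqrt (2 * Real.pi) : ℂ)⁻¹ *
    ∫ t in (0:ℝ)..1, Complex.exp (-((t : ℂ) * z) ^ 2 / 2) * z

-- basic: the exp factor has norm exp(-t^2 * (z^2).re / 2)
lemma norm_cexp_sq (w : ℂ) : ‖Complex.exp (-w ^ 2 / 2)‖ = Real.exp (-(w ^ 2).re / 2) := by
  rw [Complex.norm_exp]
  norm_num

lemma norm_cexp_sq_le_one {w : ℂ} (h : 0 ≤ (w ^ 2).re) : ‖Complex.exp (-w ^ 2 / 2)‖ ≤ 1 := by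
  rw [norm_cexp_sq, Real.exp_le_one_iff]
  linarith

-- derivative of the integrand in t (for FTC step)
lemma hasDerivAt_t_mul_exp (z : ℂ) (t : ℝ) :
    HasDerivAt (fun t : ℝ => (t : ℂ) * Complex.exp (-((t : ℂ) * z) ^ 2 / 2))
      (Complex.exp (-((t : ℂ) * z) ^ 2 / 2) * (1 - (t : ℂ) ^ 2 * z ^ 2)) t := by
  have h1 : HasDerivAt (fun t : ℝ => (t : ℂ)) 1 t := Complex.ofRealCLM.hasDerivAt
  have h2 : HasDerivAt (fun t : ℝ => -((t : ℂ) * z) ^ 2 / 2) (-(t : ℂ) * z ^ 2) t := by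
    have h0 := (((h1.mul_const z).mul (h1.mul_const z)).neg.div_const 2)
    have : (fun t : ℝ => -((t : ℂ) * z) ^ 2 / 2) = fun t : ℝ => -((t : ℂ) * z * ((t : ℂ) * z)) / 2 := by
      funext t; ring
    rw [this]
    refine h0.congr_deriv ?_
    ring
  have := h1.mul h2.cexp
  refine this.congr_deriv ?_
  ring

lemma hasDerivAt_F (t : ℝ) (x : ℂ) :
    HasDerivAt (fun x : ℂ => Complex.exp (-((t : ℂ) * x) ^ 2 / 2) * x)
      (Complex.exp (-((t : ℂ) * x) ^ 2 / 2) * (1 - (t : ℂ) ^ 2 * x ^ 2)) x := by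
  have h1 : HasDerivAt (fun x : ℂ => -((t : ℂ) * x) ^ 2 / 2) (-(t : ℂ) ^ 2 * x) x := by
    have h0 := ((((hasDerivAt_id x).const_mul (t : ℂ)).pow 2).neg.div_const 2)
    refine h0.congr_deriv ?_
    simp
    ring
  have := h1.cexp.mul (hasDerivAt_id x)
  refine this.congr_deriv ?_
  simp only [id_eq]
  ring

lemma Phi_hasDerivAt (z : ℂ) :
    HasDerivAt Phi ((Real.sqrt (2 * Real.pi) : ℂ)⁻¹ * Complex.exp (-z ^ 2 / 2)) z := by
  obtain ⟨R, hR⟩ : ∃ R : ℝ, R = ‖z‖ + 1 := ⟨_, rfl⟩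
  have hcont : ∀ x : ℂ, Continuous (fun t : ℝ => Complex.exp (-((t : ℂ) * x) ^ 2 / 2) * x) := by
    intro x; fun_prop
  have hcont' : Continuous (fun t : ℝ => Complex.exp (-((t : ℂ) * z) ^ 2 / 2) * (1 - (t : ℂ) ^ 2 * z ^ 2)) := by
    fun_prop
  have key := intervalIntegral.hasDerivAt_integral_of_dominated_loc_of_deriv_le
    (F := fun (x : ℂ) (t : ℝ) => Complex.exp (-((t : ℂ) * x) ^ 2 / 2) * x)
    (F' := fun (x : ℂ) (t : ℝ) => Complex.exp (-((t : ℂ) * x) ^ 2 / 2) * (1 - (t : ℂ) ^ 2 * x ^ 2))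
    (x₀ := z) (a := 0) (b := 1) (μ := volume)
    (bound := fun _ => Real.exp (R ^ 2 / 2) * (1 + R ^ 2))
    (Metric.ball_mem_nhds _ one_pos)
    (Filter.Eventually.of_forall fun x => ((hcont x).aestronglyMeasurable))
    ((hcont z).intervalIntegrable 0 1)
    hcont'.aestronglyMeasurable
    ?_
    (intervalIntegrable_const)
    (Filter.Eventually.of_forall fun t _ x _ => hasDerivAt_F t x)
  · obtain ⟨-, hd⟩ := key
    have hval : (∫ t in (0:ℝ)..1,
        Complex.exp (-((t : ℂ) * z) ^ 2 / 2) * (1 - (t : ℂ) ^ 2 * z ^ 2)) =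
        Complex.exp (-z ^ 2 / 2) := by
      have := intervalIntegral.integral_eq_sub_of_hasDerivAt
        (f := fun t : ℝ => (t : ℂ) * Complex.exp (-((t : ℂ) * z) ^ 2 / 2))
        (fun t _ => hasDerivAt_t_mul_exp z t)
        (hcont'.intervalIntegrable 0 1)
      rw [this]
      norm_num
    rw [hval] at hd
    unfold Phi
    exact (hd.const_mul ((Real.sqrt (2 * Real.pi) : ℂ)⁻¹)).const_add _
  · refine Filter.Eventually.of_forall fun t ht x hx => ?_
    have ht1 : |t| ≤ 1 := by
      rw [Set.uIoc_of_le (by norm_num : (0:ℝ) ≤ 1)] at ht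
      rw [abs_le]; constructor <;> [linarith [ht.1.le]; exact ht.2]
    have hxR : ‖x‖ ≤ R := by
      have := mem_ball_iff_norm.mp hx
      have := norm_sub_norm_le x z
      rw [hR]; linarith
    have htx : ‖(t : ℂ) * x‖ ≤ R := by
      rw [norm_mul, Complex.norm_real, Real.norm_eq_abs]
      have h0R : (0:ℝ) ≤ R := le_trans (norm_nonneg z) (by linarith)
      calc |t| * ‖x‖ ≤ 1 * R := by
            apply mul_le_mul ht1 hxR (norm_nonneg x) zero_le_one
        _ = R := one_mul R
    rw [norm_mul]
    have hexp : ‖Complex.exp (-((t : ℂ) * x) ^ 2 / 2)‖ ≤ Real.exp (R ^ 2 / 2) := by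
      rw [Complex.norm_exp]
      apply Real.exp_le_exp.2
      have h1 : (-((t : ℂ) * x) ^ 2 / 2).re ≤ ‖(-((t : ℂ) * x) ^ 2 / 2)‖ :=
        Complex.re_le_norm _
      have h2 : ‖(-((t : ℂ) * x) ^ 2 / 2)‖ = ‖(t : ℂ) * x‖ ^ 2 / 2 := by
        simp
      have h3 : ‖(t : ℂ) * x‖ ^ 2 ≤ R ^ 2 := by
        apply pow_le_pow_left₀ (norm_nonneg _) htx
      rw [h2] at h1
      calc (-((t : ℂ) * x) ^ 2 / 2).re ≤ ‖(t : ℂ) * x‖ ^ 2 / 2 := h1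
        _ ≤ R ^ 2 / 2 := by linarith
    have hlin : ‖(1 : ℂ) - (t : ℂ) ^ 2 * x ^ 2‖ ≤ 1 + R ^ 2 := by
      calc ‖(1 : ℂ) - (t : ℂ) ^ 2 * x ^ 2‖ ≤ ‖(1:ℂ)‖ + ‖(t : ℂ) ^ 2 * x ^ 2‖ := norm_sub_le _ _
        _ ≤ 1 + R ^ 2 := by
            rw [norm_one, norm_mul, norm_pow, norm_pow]
            have : ‖(t:ℂ)‖ ^ 2 * ‖x‖ ^ 2 = ‖(t:ℂ) * x‖ ^ 2 := by rw [norm_mul]; ring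
            rw [this]
            have h3 : ‖(t : ℂ) * x‖ ^ 2 ≤ R ^ 2 := pow_le_pow_left₀ (norm_nonneg _) htx 2
            linarith
    exact mul_le_mul hexp hlin (norm_nonneg _) (Real.exp_nonneg _)

lemma Phi_differentiable : Differentiable ℂ Phi :=
  fun z => (Phi_hasDerivAt z).differentiableAt

lemma Phi_continuous : Continuous Phi := Phi_differentiable.continuous

lemma norm_E_le_one {u : ℂ} (h : 0 ≤ (u ^ 2).re) (t : ℝ) :
    ‖Complex.exp (-((t : ℂ) * u) ^ 2 / 2)‖ ≤ 1 := by
  apply norm_cexp_sq_le_one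
  have h2 : ((t : ℂ) * u) ^ 2 = ((t ^ 2 : ℝ) : ℂ) * u ^ 2 := by push_cast; ring
  rw [h2, Complex.re_ofReal_mul]
  exact mul_nonneg (sq_nonneg t) h

lemma hasDerivAt_inner (z : ℂ) (t : ℝ) :
    HasDerivAt (fun t : ℝ => -((t : ℂ) * z) ^ 2 / 2) (-(t : ℂ) * z ^ 2) t := by
  have h1 : HasDerivAt (fun t : ℝ => (t : ℂ)) 1 t := Complex.ofRealCLM.hasDerivAt
  have h0 := (((h1.mul_const z).mul (h1.mul_const z)).neg.div_const 2)
  have he : (fun t : ℝ => -((t : ℂ) * z) ^ 2 / 2) = fun t : ℝ => -((t : ℂ) * z * ((t : ℂ) * z)) / 2 := by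
    funext t; ring
  rw [he]
  refine h0.congr_deriv ?_
  ring

lemma hasDerivAt_E (u : ℂ) (t : ℝ) :
    HasDerivAt (fun t : ℝ => Complex.exp (-((t : ℂ) * u) ^ 2 / 2))
      (-(t : ℂ) * u ^ 2 * Complex.exp (-((t : ℂ) * u) ^ 2 / 2)) t := by
  have := (hasDerivAt_inner u t).cexp
  convert this using 1
  ring

lemma continuous_E (u : ℂ) : Continuous (fun t : ℝ => Complex.exp (-((t : ℂ) * u) ^ 2 / 2)) := by
  fun_prop

lemma norm_J_le {u : ℂ} (h : 0 ≤ (u ^ 2).re) :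
    ‖∫ t in (0:ℝ)..1, Complex.exp (-((t : ℂ) * u) ^ 2 / 2) * u‖ ≤ 4 := by
  by_cases hu2 : ‖u‖ ≤ 2
  · have := intervalIntegral.norm_integral_le_of_norm_le_const (a := 0) (b := 1) (C := 2)
      (f := fun t : ℝ => Complex.exp (-((t : ℂ) * u) ^ 2 / 2) * u) ?_
    · calc ‖∫ t in (0:ℝ)..1, Complex.exp (-((t : ℂ) * u) ^ 2 / 2) * u‖ ≤ 2 * |1 - 0| := this
        _ ≤ 4 := by norm_num
    · intro t _
      rw [norm_mul]
      calc ‖Complex.exp (-((t : ℂ) * u) ^ 2 / 2)‖ * ‖u‖ ≤ 1 * 2 :=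
            mul_le_mul (norm_E_le_one h t) hu2 (norm_nonneg _) zero_le_one
        _ = 2 := one_mul 2
  · push_neg at hu2
    have hu0 : u ≠ 0 := by intro h0; rw [h0] at hu2; simp at hu2; linarith
    have hunorm : (0:ℝ) < ‖u‖ := by linarith
    set δ : ℝ := ‖u‖⁻¹ with hδ
    have hδpos : 0 < δ := by positivity
    have hδhalf : δ < 1/2 := by
      rw [hδ]; rw [inv_lt_comm₀ hunorm (by norm_num)]; linarith
    have hδ1 : δ ≤ 1 := by linarith
    set E : ℝ → ℂ := fun t : ℝ => Complex.exp (-((t : ℂ) * u) ^ 2 / 2) with hE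
    -- split the integral
    have hint1 : IntervalIntegrable (fun t => E t * u) volume 0 δ :=
      (((continuous_E u).mul continuous_const)).intervalIntegrable 0 δ
    have hint2 : IntervalIntegrable (fun t => E t * u) volume δ 1 :=
      (((continuous_E u).mul continuous_const)).intervalIntegrable δ 1
    have hsplit : (∫ t in (0:ℝ)..δ, E t * u) + (∫ t in δ..1, E t * u)
        = ∫ t in (0:ℝ)..1, E t * u := intervalIntegral.integral_add_adjacent_intervals hint1 hint2
    -- first piece
    have hfirst : ‖∫ t in (0:ℝ)..δ, E t * u‖ ≤ 1 := by
      have := intervalIntegral.norm_integral_le_of_norm_le_const (a := 0) (b := δ) (C := ‖u‖)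
        (f := fun t => E t * u) ?_
      · calc ‖∫ t in (0:ℝ)..δ, E t * u‖ ≤ ‖u‖ * |δ - 0| := this
          _ = ‖u‖ * δ := by rw [sub_zero, abs_of_pos hδpos]
          _ = 1 := by rw [hδ, mul_inv_cancel₀ (ne_of_gt hunorm)]
      · intro t _
        rw [norm_mul]
        calc ‖E t‖ * ‖u‖ ≤ 1 * ‖u‖ :=
              mul_le_mul_of_nonneg_right (norm_E_le_one h t) (norm_nonneg u)
          _ = ‖u‖ := one_mul _
    -- integration by parts on [δ, 1]
    set hfun : ℝ → ℂ := fun t => -E t / (u ^ 2 * (t : ℂ)) with hh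
    have hderiv : ∀ t : ℝ, t ≠ 0 →
        HasDerivAt hfun (E t + E t * (u ^ 2 * (t : ℂ) ^ 2)⁻¹) t := by
      intro t ht
      have htc : ((t : ℂ)) ≠ 0 := Complex.ofReal_ne_zero.mpr ht
      have hu2c : u ^ 2 * (t : ℂ) ≠ 0 := mul_ne_zero (pow_ne_zero 2 hu0) htc
      have h1 : HasDerivAt (fun t : ℝ => u ^ 2 * (t : ℂ)) (u ^ 2) t := by
        have h0 : HasDerivAt (fun t : ℝ => (t : ℂ)) 1 t := Complex.ofRealCLM.hasDerivAt
        simpa using h0.const_mul (u ^ 2)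
      have := ((hasDerivAt_E u t).fun_neg).div h1 hu2c
      refine this.congr_deriv ?_
      rw [hE]
      field_simp
      ring
    have hcontOn : ContinuousOn (fun t : ℝ => E t + E t * (u ^ 2 * (t : ℂ) ^ 2)⁻¹) (Set.uIcc δ 1) := by
      apply ((continuous_E u).continuousOn).add
      apply ((continuous_E u).continuousOn).mul
      apply ContinuousOn.inv₀
      · fun_prop
      · intro t ht
        rw [Set.uIcc_of_le hδ1] at ht
        have ht0 : t ≠ 0 := ne_of_gt (lt_of_lt_of_le hδpos ht.1)
        exact mul_ne_zero (pow_ne_zero 2 hu0) (by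
          exact pow_ne_zero 2 (Complex.ofReal_ne_zero.mpr ht0))
    have hftc : ∫ t in δ..1, (E t + E t * (u ^ 2 * (t : ℂ) ^ 2)⁻¹)
        = hfun 1 - hfun δ := by
      apply intervalIntegral.integral_eq_sub_of_hasDerivAt
      · intro t ht
        rw [Set.uIcc_of_le hδ1] at ht
        exact hderiv t (ne_of_gt (lt_of_lt_of_le hδpos ht.1))
      · exact hcontOn.intervalIntegrable
    -- continuity of the correction term
    have hcontOn2 : ContinuousOn (fun t : ℝ => E t * (u ^ 2 * (t : ℂ) ^ 2)⁻¹) (Set.uIcc δ 1) := by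
      apply ((continuous_E u).continuousOn).mul
      apply ContinuousOn.inv₀
      · fun_prop
      · intro t ht
        rw [Set.uIcc_of_le hδ1] at ht
        have ht0 : t ≠ 0 := ne_of_gt (lt_of_lt_of_le hδpos ht.1)
        exact mul_ne_zero (pow_ne_zero 2 hu0) (pow_ne_zero 2 (Complex.ofReal_ne_zero.mpr ht0))
    have hint4 : IntervalIntegrable E volume δ 1 := (continuous_E u).intervalIntegrable δ 1
    have hint5 : IntervalIntegrable (fun t => E t * (u ^ 2 * (t : ℂ) ^ 2)⁻¹) volume δ 1 :=
      hcontOn2.intervalIntegrable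
    have hEadd : (∫ t in δ..1, E t)
        = (hfun 1 - hfun δ) - ∫ t in δ..1, E t * (u ^ 2 * (t : ℂ) ^ 2)⁻¹ := by
      rw [intervalIntegral.integral_add hint4 hint5] at hftc
      linear_combination hftc
    have hmulu : (∫ t in δ..1, E t * u) = (∫ t in δ..1, E t) * u :=
      intervalIntegral.integral_mul_const u E
    set n : ℝ := ‖u‖ with hn
    have hn2 : (2:ℝ) < n := hu2
    have hnpos : (0:ℝ) < n := by linarith
    -- bound the boundary terms
    have hb1 : ‖hfun 1 * u‖ ≤ 1/2 := by
      rw [hh]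
      simp only [Complex.ofReal_one, mul_one]
      rw [norm_mul, norm_div, norm_neg, norm_pow]
      have hE1 : ‖E (1:ℝ)‖ ≤ 1 := by rw [hE]; exact norm_E_le_one h 1
      have step : ‖E (1:ℝ)‖ / ‖u‖ ^ 2 * ‖u‖ ≤ 1 / ‖u‖ ^ 2 * ‖u‖ := by
        gcongr
      have heq : (1:ℝ) / ‖u‖ ^ 2 * ‖u‖ = 1 / n := by
        rw [← hn, pow_two]
        field_simp
      have hfin : (1:ℝ) / n ≤ 1/2 := by
        apply one_div_le_one_div_of_le (by norm_num) (by linarith)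
      calc ‖E (1:ℝ)‖ / ‖u‖ ^ 2 * ‖u‖ ≤ 1 / ‖u‖ ^ 2 * ‖u‖ := step
        _ = 1 / n := heq
        _ ≤ 1/2 := hfin
    have hbδ : ‖hfun δ * u‖ ≤ 1 := by
      rw [hh]
      rw [norm_mul, norm_div, norm_neg]
      have hEδ : ‖E δ‖ ≤ 1 := by rw [hE]; exact norm_E_le_one h δ
      have hden : ‖u ^ 2 * (δ : ℂ)‖ = n := by
        rw [norm_mul, norm_pow, Complex.norm_real, Real.norm_eq_abs, abs_of_pos hδpos, hδ,
          pow_two, mul_assoc, mul_inv_cancel₀ (ne_of_gt hnpos), mul_one]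
      rw [hden]
      have : ‖E δ‖ / n * n ≤ 1 / n * n := by gcongr
      calc ‖E δ‖ / n * n ≤ 1 / n * n := this
        _ = 1 := by field_simp
    -- bound the correction integral
    have hbint : ‖(∫ t in δ..1, E t * (u ^ 2 * (t : ℂ) ^ 2)⁻¹) * u‖ ≤ 1 := by
      have hg : ∀ t ∈ Set.uIoc δ 1, ‖E t * (u ^ 2 * (t : ℂ) ^ 2)⁻¹‖ ≤ (n ^ 2)⁻¹ * (t ^ 2)⁻¹ := by
        intro t ht
        rw [Set.uIoc_of_le hδ1] at ht
        have htpos : 0 < t := lt_of_lt_of_le hδpos ht.1.le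
        rw [norm_mul, norm_inv, norm_mul, norm_pow, norm_pow, Complex.norm_real,
          Real.norm_eq_abs, abs_of_pos htpos, ← hn, mul_inv]
        have hEt : ‖E t‖ ≤ 1 := by rw [hE]; exact norm_E_le_one h t
        calc ‖E t‖ * ((n ^ 2)⁻¹ * (t ^ 2)⁻¹) ≤ 1 * ((n ^ 2)⁻¹ * (t ^ 2)⁻¹) := by
              apply mul_le_mul_of_nonneg_right hEt; positivity
          _ = (n ^ 2)⁻¹ * (t ^ 2)⁻¹ := one_mul _
      have hgint : IntervalIntegrable (fun t : ℝ => (n ^ 2)⁻¹ * (t ^ 2)⁻¹) volume δ 1 := by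
        apply ContinuousOn.intervalIntegrable
        apply ContinuousOn.mul continuousOn_const
        apply ContinuousOn.inv₀ (by fun_prop)
        intro t ht
        rw [Set.uIcc_of_le hδ1] at ht
        exact pow_ne_zero 2 (ne_of_gt (lt_of_lt_of_le hδpos ht.1))
      have hval : (∫ t in δ..1, (t ^ 2)⁻¹) = n - 1 := by
        have hftc2 : (∫ t in δ..1, (t ^ 2)⁻¹) = -(1:ℝ)⁻¹ - -δ⁻¹ := by
          apply intervalIntegral.integral_eq_sub_of_hasDerivAt
            (f := fun t : ℝ => -t⁻¹)
          · intro t ht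
            rw [Set.uIcc_of_le hδ1] at ht
            have ht0 : t ≠ 0 := ne_of_gt (lt_of_lt_of_le hδpos ht.1)
            simpa using (hasDerivAt_inv ht0).fun_neg
          · apply ContinuousOn.intervalIntegrable
            apply ContinuousOn.inv₀ (by fun_prop)
            intro t ht
            rw [Set.uIcc_of_le hδ1] at ht
            exact pow_ne_zero 2 (ne_of_gt (lt_of_lt_of_le hδpos ht.1))
        rw [hftc2, hδ, inv_inv]
        ring
      have hnormle := intervalIntegral.norm_integral_le_abs_of_norm_le
        (μ := volume) (a := δ) (b := 1)
        (f := fun t => E t * (u ^ 2 * (t : ℂ) ^ 2)⁻¹)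
        (g := fun t : ℝ => (n ^ 2)⁻¹ * (t ^ 2)⁻¹)
        ?_ hgint
      · have hgval : (∫ t in δ..1, (n ^ 2)⁻¹ * (t ^ 2)⁻¹) = (n ^ 2)⁻¹ * (n - 1) := by
          rw [intervalIntegral.integral_const_mul, hval]
        rw [norm_mul, ← hn]
        have h1 : ‖∫ t in δ..1, E t * (u ^ 2 * (t : ℂ) ^ 2)⁻¹‖ ≤ (n ^ 2)⁻¹ * (n - 1) := by
          calc ‖∫ t in δ..1, E t * (u ^ 2 * (t : ℂ) ^ 2)⁻¹‖
              ≤ |∫ t in δ..1, (n ^ 2)⁻¹ * (t ^ 2)⁻¹| := hnormle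
            _ = (n ^ 2)⁻¹ * (n - 1) := by
                rw [hgval, abs_of_nonneg]
                exact mul_nonneg (by positivity) (by linarith)
        calc ‖∫ t in δ..1, E t * (u ^ 2 * (t : ℂ) ^ 2)⁻¹‖ * n
            ≤ (n ^ 2)⁻¹ * (n - 1) * n := by
              apply mul_le_mul_of_nonneg_right h1 (le_of_lt hnpos)
          _ = (n - 1) / n := by field_simp
          _ ≤ 1 := by rw [div_le_one hnpos]; linarith
      · filter_upwards [MeasureTheory.ae_restrict_mem measurableSet_uIoc] with t ht
        exact hg t ht
    -- assemble
    have hsecond : ‖∫ t in δ..1, E t * u‖ ≤ 5/2 := by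
      rw [hmulu, hEadd]
      calc ‖((hfun 1 - hfun δ) - ∫ t in δ..1, E t * (u ^ 2 * (t : ℂ) ^ 2)⁻¹) * u‖
          = ‖hfun 1 * u - hfun δ * u - (∫ t in δ..1, E t * (u ^ 2 * (t : ℂ) ^ 2)⁻¹) * u‖ := by
            rw [sub_mul, sub_mul]
        _ ≤ ‖hfun 1 * u - hfun δ * u‖ + ‖(∫ t in δ..1, E t * (u ^ 2 * (t : ℂ) ^ 2)⁻¹) * u‖ :=
            norm_sub_le _ _
        _ ≤ (‖hfun 1 * u‖ + ‖hfun δ * u‖) + 1 := by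
            have := norm_sub_le (hfun 1 * u) (hfun δ * u)
            linarith
        _ ≤ (1/2 + 1) + 1 := by linarith
        _ ≤ 5/2 := by norm_num
    calc ‖∫ t in (0:ℝ)..1, E t * u‖ = ‖(∫ t in (0:ℝ)..δ, E t * u) + ∫ t in δ..1, E t * u‖ := by
          rw [hsplit]
      _ ≤ ‖∫ t in (0:ℝ)..δ, E t * u‖ + ‖∫ t in δ..1, E t * u‖ := norm_add_le _ _
      _ ≤ 1 + 5/2 := by linarith
      _ ≤ 4 := by norm_num

lemma Phi_norm_le {u : ℂ} (h : 0 ≤ (u ^ 2).re) : ‖Phi u‖ ≤ 5 := by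
  unfold Phi
  have hsqrt : (1:ℝ) ≤ Real.sqrt (2 * Real.pi) := by
    rw [show (1:ℝ) = Real.sqrt 1 by simp]
    apply Real.sqrt_le_sqrt
    linarith [Real.pi_gt_three]
  have hc : ‖((Real.sqrt (2 * Real.pi) : ℝ) : ℂ)⁻¹‖ ≤ 1 := by
    rw [norm_inv, Complex.norm_real, Real.norm_eq_abs, abs_of_nonneg (by positivity)]
    exact inv_le_one_of_one_le₀ hsqrt
  calc ‖(1:ℂ) / 2 + ((Real.sqrt (2 * Real.pi) : ℝ) : ℂ)⁻¹ *
        ∫ t in (0:ℝ)..1, Complex.exp (-((t : ℂ) * u) ^ 2 / 2) * u‖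
      ≤ ‖(1:ℂ)/2‖ + ‖((Real.sqrt (2 * Real.pi) : ℝ) : ℂ)⁻¹ *
        ∫ t in (0:ℝ)..1, Complex.exp (-((t : ℂ) * u) ^ 2 / 2) * u‖ := norm_add_le _ _
    _ ≤ 1/2 + 1 * 4 := by
        apply add_le_add
        · norm_num
        · rw [norm_mul]
          exact mul_le_mul hc (norm_J_le h) (norm_nonneg _) zero_le_one
    _ ≤ 5 := by norm_num

section G
variable {d : ℕ} (c : Fin (d + 1) → ℝ)

noncomputable def gfun (x : ℂ) : ℂ :=
  (∏ j, Phi ((c j : ℂ) * x)) * Complex.exp (-x ^ 2 / 2)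

lemma gfun_differentiable : Differentiable ℂ (gfun c) := by
  apply Differentiable.mul
  · apply Differentiable.fun_finsetProd
    intro j _
    exact Phi_differentiable.comp ((differentiable_id.const_mul ((c j : ℂ))))
  · apply Differentiable.cexp
    apply Differentiable.div_const
    exact (differentiable_id.pow 2).neg

lemma gfun_continuous : Continuous (gfun c) := (gfun_differentiable c).continuous

lemma gfun_deriv_continuous : Continuous (deriv (gfun c)) :=
  ((gfun_differentiable c).contDiff (n := 1)).continuous_deriv le_rfl

lemma gfun_norm_le {x : ℂ} (hx : 0 ≤ (x ^ 2).re) :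
    ‖gfun c x‖ ≤ 5 ^ (d + 1) * Real.exp (-(x ^ 2).re / 2) := by
  unfold gfun
  rw [norm_mul]
  have h1 : ‖∏ j, Phi ((c j : ℂ) * x)‖ ≤ 5 ^ (d + 1) := by
    rw [norm_prod]
    calc ∏ j, ‖Phi ((c j : ℂ) * x)‖ ≤ ∏ _j : Fin (d+1), (5:ℝ) := by
          apply Finset.prod_le_prod
          · intro j _; exact norm_nonneg _
          · intro j _
            apply Phi_norm_le
            have : ((c j : ℂ) * x) ^ 2 = (((c j ^ 2 : ℝ)) : ℂ) * x ^ 2 := by push_cast; ring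
            rw [this, Complex.re_ofReal_mul]
            exact mul_nonneg (sq_nonneg _) hx
      _ = 5 ^ (d + 1) := by simp
  have h2 : ‖Complex.exp (-x ^ 2 / 2)‖ = Real.exp (-(x ^ 2).re / 2) := by
    rw [Complex.norm_exp]
    congr 1
    simp
  rw [h2]
  exact mul_le_mul_of_nonneg_right h1 (Real.exp_nonneg _)

end G

section Prim
variable {d : ℕ} (c : Fin (d + 1) → ℝ)

noncomputable def Fprim (w : ℂ) : ℂ := ∫ t in (0:ℝ)..1, gfun c ((t : ℂ) * w) * w

lemma Fprim_hasDerivAt (w₀ : ℂ) : HasDerivAt (Fprim c) (gfun c w₀) w₀ := by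
  obtain ⟨R, hR⟩ : ∃ R : ℝ, R = ‖w₀‖ + 1 := ⟨_, rfl⟩
  have hR0 : 0 ≤ R := by rw [hR]; positivity
  obtain ⟨C₁, hC₁⟩ := (isCompact_closedBall (0:ℂ) R).exists_bound_of_continuousOn
    (gfun_continuous c).continuousOn
  obtain ⟨C₂, hC₂⟩ := (isCompact_closedBall (0:ℂ) R).exists_bound_of_continuousOn
    (gfun_deriv_continuous c).continuousOn
  have hC₂0 : 0 ≤ C₂ := le_trans (norm_nonneg _) (hC₂ 0 (Metric.mem_closedBall_self hR0))
  have hmem : ∀ (t : ℝ), t ∈ Set.uIoc (0:ℝ) 1 → ∀ x ∈ Metric.ball w₀ 1,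
      ((t : ℂ) * x) ∈ Metric.closedBall (0:ℂ) R ∧ ‖x‖ ≤ R := by
    intro t ht x hx
    rw [Set.uIoc_of_le (by norm_num : (0:ℝ) ≤ 1)] at ht
    have ht1 : |t| ≤ 1 := by rw [abs_le]; exact ⟨by linarith [ht.1.le], ht.2⟩
    have hxR : ‖x‖ ≤ R := by
      have h1 := mem_ball_iff_norm.mp hx
      have h2 := norm_sub_norm_le x w₀
      rw [hR]; linarith
    refine ⟨?_, hxR⟩
    rw [Metric.mem_closedBall, dist_zero_right, norm_mul, Complex.norm_real, Real.norm_eq_abs]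
    calc |t| * ‖x‖ ≤ 1 * R := mul_le_mul ht1 hxR (norm_nonneg _) zero_le_one
      _ = R := one_mul R
  have hcontF : ∀ x : ℂ, Continuous (fun t : ℝ => gfun c ((t : ℂ) * x) * x) := by
    intro x
    exact ((gfun_continuous c).comp (by fun_prop)).mul continuous_const
  have hcontF' : Continuous (fun t : ℝ =>
      deriv (gfun c) ((t : ℂ) * w₀) * (t : ℂ) * w₀ + gfun c ((t : ℂ) * w₀)) := by
    have h1 : Continuous (fun t : ℝ => ((t : ℂ) * w₀)) := by fun_prop
    exact ((((gfun_deriv_continuous c).comp h1).mul (by fun_prop)).mul continuous_const).add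
      ((gfun_continuous c).comp h1)
  have key := intervalIntegral.hasDerivAt_integral_of_dominated_loc_of_deriv_le
    (F := fun (x : ℂ) (t : ℝ) => gfun c ((t : ℂ) * x) * x)
    (F' := fun (x : ℂ) (t : ℝ) => deriv (gfun c) ((t : ℂ) * x) * (t : ℂ) * x + gfun c ((t : ℂ) * x))
    (x₀ := w₀) (a := 0) (b := 1) (μ := volume)
    (bound := fun _ => C₂ * R + C₁)
    (Metric.ball_mem_nhds _ one_pos)
    (Filter.Eventually.of_forall fun x => (hcontF x).aestronglyMeasurable)
    ((hcontF w₀).intervalIntegrable 0 1)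
    hcontF'.aestronglyMeasurable
    ?_ intervalIntegrable_const ?_
  · obtain ⟨-, hd⟩ := key
    have hval : (∫ t in (0:ℝ)..1,
        (deriv (gfun c) ((t : ℂ) * w₀) * (t : ℂ) * w₀ + gfun c ((t : ℂ) * w₀)))
        = gfun c w₀ := by
      have hftc := intervalIntegral.integral_eq_sub_of_hasDerivAt
        (f := fun t : ℝ => (t : ℂ) * gfun c ((t : ℂ) * w₀))
        (f' := fun t : ℝ => deriv (gfun c) ((t : ℂ) * w₀) * (t : ℂ) * w₀ + gfun c ((t : ℂ) * w₀))
        ?_ (hcontF'.intervalIntegrable 0 1)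
      · rw [hftc]; norm_num
      · intro t _
        have h1 : HasDerivAt (fun t : ℝ => (t : ℂ)) 1 t := Complex.ofRealCLM.hasDerivAt
        have hinner : HasDerivAt (fun t : ℝ => (t : ℂ) * w₀) w₀ t := by
          simpa using h1.mul_const w₀
        have hg : HasDerivAt (gfun c) (deriv (gfun c) ((t : ℂ) * w₀)) ((t : ℂ) * w₀) :=
          ((gfun_differentiable c) _).hasDerivAt
        have hcomp : HasDerivAt (fun t : ℝ => gfun c ((t : ℂ) * w₀))
            (w₀ • deriv (gfun c) ((t : ℂ) * w₀)) t := by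
            have := HasDerivAt.scomp t hg hinner; exact this
        have := h1.mul hcomp
        refine this.congr_deriv ?_
        simp only [smul_eq_mul]
        ring
    rw [hval] at hd
    exact hd
  · refine Filter.Eventually.of_forall fun t ht x hx => ?_
    obtain ⟨hmem1, hxR⟩ := hmem t ht x hx
    have ht1 : |t| ≤ 1 := by
      rw [Set.uIoc_of_le (by norm_num : (0:ℝ) ≤ 1)] at ht
      rw [abs_le]; exact ⟨by linarith [ht.1.le], ht.2⟩
    calc ‖deriv (gfun c) ((t : ℂ) * x) * (t : ℂ) * x + gfun c ((t : ℂ) * x)‖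
        ≤ ‖deriv (gfun c) ((t : ℂ) * x) * (t : ℂ) * x‖ + ‖gfun c ((t : ℂ) * x)‖ := norm_add_le _ _
      _ ≤ C₂ * R + C₁ := by
          apply add_le_add
          · rw [mul_assoc, norm_mul]
            have hb1 : ‖deriv (gfun c) ((t : ℂ) * x)‖ ≤ C₂ := hC₂ _ hmem1
            have hb2 : ‖(t : ℂ) * x‖ ≤ R := by
              rw [norm_mul, Complex.norm_real, Real.norm_eq_abs]
              calc |t| * ‖x‖ ≤ 1 * R := mul_le_mul ht1 hxR (norm_nonneg _) zero_le_one
                _ = R := one_mul R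
            exact mul_le_mul hb1 hb2 (norm_nonneg _) hC₂0
          · exact hC₁ _ hmem1
  · refine Filter.Eventually.of_forall fun t ht x hx => ?_
    have hinner : HasDerivAt (fun x : ℂ => (t : ℂ) * x) (t : ℂ) x := by
      simpa using (hasDerivAt_id x).const_mul ((t : ℂ))
    have hg : HasDerivAt (gfun c) (deriv (gfun c) ((t : ℂ) * x)) ((t : ℂ) * x) :=
      ((gfun_differentiable c) _).hasDerivAt
    have hcomp : HasDerivAt (fun x : ℂ => gfun c ((t : ℂ) * x))
        (deriv (gfun c) ((t : ℂ) * x) * (t : ℂ)) x := by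
      have := HasDerivAt.comp x hg hinner
      exact this
    have := hcomp.mul (hasDerivAt_id x)
    refine this.congr_deriv ?_
    simp only [id_eq]
    ring

lemma integral_ray (ω : ℂ) (B : ℝ) :
    (∫ y in (0:ℝ)..B, gfun c (ω * (y : ℂ)) * ω) = Fprim c (ω * (B : ℂ)) - Fprim c 0 := by
  have h0 : Fprim c (ω * ((0:ℝ) : ℂ)) = Fprim c 0 := by norm_num
  rw [← h0]
  apply intervalIntegral.integral_eq_sub_of_hasDerivAt
  · intro y _
    have h1 : HasDerivAt (fun y : ℝ => (y : ℂ)) 1 y := Complex.ofRealCLM.hasDerivAt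
    have hinner : HasDerivAt (fun y : ℝ => ω * (y : ℂ)) ω y := by
      simpa using h1.const_mul ω
    have := HasDerivAt.scomp y (Fprim_hasDerivAt c (ω * (y:ℂ))) hinner
    refine this.congr_deriv ?_
    simp only [smul_eq_mul]
    ring
  · exact (((gfun_continuous c).comp (by fun_prop)).mul continuous_const).intervalIntegrable 0 B

end Prim

section Arc
variable {d : ℕ} (c : Fin (d + 1) → ℝ)
open Complex in
lemma arc_bound {R θ : ℝ} (hR : 0 < R) (hθ : |θ| ≤ Real.pi / 4) :
    ‖Fprim c ((R : ℂ) * Complex.exp ((θ : ℂ) * Complex.I)) - Fprim c (R : ℂ)‖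
      ≤ 5 ^ (d + 1) * Real.pi / R := by
  have hπ := Real.pi_pos
  -- FTC over the arc
  have harc : Fprim c ((R : ℂ) * Complex.exp ((θ : ℂ) * Complex.I)) - Fprim c (R : ℂ)
      = ∫ φ in (0:ℝ)..θ, gfun c ((R : ℂ) * Complex.exp ((φ : ℂ) * Complex.I)) *
          ((R : ℂ) * (Complex.exp ((φ : ℂ) * Complex.I) * Complex.I)) := by
    have h0 : ((R : ℂ) * Complex.exp (((0:ℝ) : ℂ) * Complex.I)) = (R : ℂ) := by simp
    rw [show Fprim c (R : ℂ) = Fprim c ((R : ℂ) * Complex.exp (((0:ℝ) : ℂ) * Complex.I)) by rw [h0]]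
    rw [eq_comm]
    apply intervalIntegral.integral_eq_sub_of_hasDerivAt
    · intro φ _
      have h1 : HasDerivAt (fun φ : ℝ => (φ : ℂ)) 1 φ := Complex.ofRealCLM.hasDerivAt
      have h2 : HasDerivAt (fun φ : ℝ => (φ : ℂ) * Complex.I) Complex.I φ := by
        simpa using h1.mul_const Complex.I
      have h3 : HasDerivAt (fun φ : ℝ => (R : ℂ) * Complex.exp ((φ : ℂ) * Complex.I))
          ((R : ℂ) * (Complex.exp ((φ : ℂ) * Complex.I) * Complex.I)) φ := by
        simpa using (h2.cexp.const_mul (R : ℂ))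
      have := HasDerivAt.scomp φ
        (Fprim_hasDerivAt c ((R : ℂ) * Complex.exp ((φ : ℂ) * Complex.I))) h3
      refine this.congr_deriv ?_
      simp only [smul_eq_mul]
      ring
    · apply Continuous.intervalIntegrable
      apply Continuous.mul
      · exact (gfun_continuous c).comp (by fun_prop)
      · fun_prop
  rw [harc]
  -- pointwise bound
  set K : ℝ := (5:ℝ) ^ (d + 1) with hK
  have hK0 : (0:ℝ) < K := by positivity
  set bf : ℝ → ℝ := fun φ => K * R * Real.exp (R ^ 2 * (4 * |φ| / Real.pi - 1) / 2) with hbf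
  have hbf_cont : Continuous bf := by
    apply continuous_const.mul
    apply Real.continuous_exp.comp
    fun_prop
  have hbf_nonneg : ∀ φ, 0 ≤ bf φ := by
    intro φ; rw [hbf]; positivity
  have hbf_even : ∀ φ, bf (-φ) = bf φ := by
    intro φ; simp [hbf]
  have hpt : ∀ φ : ℝ, |φ| ≤ Real.pi / 4 →
      ‖gfun c ((R : ℂ) * Complex.exp ((φ : ℂ) * Complex.I)) *
        ((R : ℂ) * (Complex.exp ((φ : ℂ) * Complex.I) * Complex.I))‖ ≤ bf φ := by
    intro φ hφ
    have habs := abs_le.mp hφ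
    have hre : (((R : ℂ) * Complex.exp ((φ : ℂ) * Complex.I)) ^ 2).re
        = R ^ 2 * Real.cos (2 * φ) := by
      have he : ((R : ℂ) * Complex.exp ((φ : ℂ) * Complex.I)) ^ 2
          = ((R ^ 2 : ℝ) : ℂ) * Complex.exp (((2 * φ : ℝ) : ℂ) * Complex.I) := by
        have hsq : Complex.exp ((φ : ℂ) * Complex.I) ^ 2
            = Complex.exp (((2 * φ : ℝ) : ℂ) * Complex.I) := by
          rw [sq, ← Complex.exp_add]
          push_cast
          ring_nf
        rw [mul_pow, hsq]
        push_cast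
        ring
      rw [he, Complex.re_ofReal_mul, Complex.exp_ofReal_mul_I_re]
    have hcos0 : 0 ≤ Real.cos (2 * φ) := by
      apply Real.cos_nonneg_of_mem_Icc
      constructor <;> [linarith; linarith]
    have hgb : ‖gfun c ((R : ℂ) * Complex.exp ((φ : ℂ) * Complex.I))‖
        ≤ K * Real.exp (-(R ^ 2 * Real.cos (2 * φ)) / 2) := by
      have := gfun_norm_le c (x := (R : ℂ) * Complex.exp ((φ : ℂ) * Complex.I))
        (by rw [hre]; positivity)
      rw [hre] at this
      exact this
    have hcosge : 1 - 4 * |φ| / Real.pi ≤ Real.cos (2 * φ) := by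
      have h1 : Real.cos (2 * φ) = Real.cos (|2 * φ|) := (Real.cos_abs _).symm
      have h2 : |2 * φ| = 2 * |φ| := by rw [abs_mul]; norm_num
      have h3 : Real.cos (2 * |φ|) = Real.sin (Real.pi / 2 - 2 * |φ|) :=
        (Real.sin_pi_div_two_sub _).symm
      have h4 : 2 / Real.pi * (Real.pi / 2 - 2 * |φ|) ≤ Real.sin (Real.pi / 2 - 2 * |φ|) := by
        apply Real.mul_le_sin
        · have := abs_nonneg φ; linarith
        · have := abs_nonneg φ; linarith
      have h5 : 2 / Real.pi * (Real.pi / 2 - 2 * |φ|) = 1 - 4 * |φ| / Real.pi := by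
        field_simp
        ring
      rw [h1, h2, h3]
      linarith [h4, h5.symm.le, h5]
    have hexpb : Real.exp (-(R ^ 2 * Real.cos (2 * φ)) / 2)
        ≤ Real.exp (R ^ 2 * (4 * |φ| / Real.pi - 1) / 2) := by
      apply Real.exp_le_exp.2
      have : R ^ 2 * (1 - 4 * |φ| / Real.pi) ≤ R ^ 2 * Real.cos (2 * φ) :=
        mul_le_mul_of_nonneg_left hcosge (by positivity)
      nlinarith
    rw [norm_mul]
    have hnorm2 : ‖(R : ℂ) * (Complex.exp ((φ : ℂ) * Complex.I) * Complex.I)‖ = R := by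
      rw [norm_mul, norm_mul, Complex.norm_real, Real.norm_eq_abs, abs_of_pos hR]
      have : ((φ : ℂ) * Complex.I) = ((φ : ℝ) : ℂ) * Complex.I := rfl
      rw [Complex.norm_exp_ofReal_mul_I]
      simp
    rw [hnorm2, hbf]
    calc ‖gfun c ((R : ℂ) * Complex.exp ((φ : ℂ) * Complex.I))‖ * R
        ≤ (K * Real.exp (-(R ^ 2 * Real.cos (2 * φ)) / 2)) * R := by
          apply mul_le_mul_of_nonneg_right hgb hR.le
      _ ≤ (K * Real.exp (R ^ 2 * (4 * |φ| / Real.pi - 1) / 2)) * R := by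
          apply mul_le_mul_of_nonneg_right _ hR.le
          exact mul_le_mul_of_nonneg_left hexpb hK0.le
      _ = K * R * Real.exp (R ^ 2 * (4 * |φ| / Real.pi - 1) / 2) := by ring
  -- norm of arc integral bounded by integral of bf
  have hstep1 : ‖∫ φ in (0:ℝ)..θ, gfun c ((R : ℂ) * Complex.exp ((φ : ℂ) * Complex.I)) *
      ((R : ℂ) * (Complex.exp ((φ : ℂ) * Complex.I) * Complex.I))‖ ≤ |∫ φ in (0:ℝ)..θ, bf φ| := by
    apply intervalIntegral.norm_integral_le_abs_of_norm_le
    · filter_upwards [MeasureTheory.ae_restrict_mem measurableSet_uIoc] with φ hφ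
      apply hpt
      rw [Set.mem_uIoc] at hφ
      rcases hφ with h | h
      · rw [abs_le]
        constructor
        · linarith [h.1, abs_nonneg θ]
        · calc φ ≤ θ := h.2
            _ ≤ |θ| := le_abs_self θ
            _ ≤ Real.pi / 4 := hθ
      · rw [abs_le]
        have := neg_abs_le θ
        exact ⟨by linarith [h.1], by linarith [h.2]⟩
    · exact hbf_cont.intervalIntegrable 0 θ
  -- reduce to nonnegative θ
  have hstep2 : |∫ φ in (0:ℝ)..θ, bf φ| = ∫ φ in (0:ℝ)..|θ|, bf φ := by
    rcases le_or_gt 0 θ with h | h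
    · rw [_root_.abs_of_nonneg h,
        _root_.abs_of_nonneg (intervalIntegral.integral_nonneg h (fun φ _ => hbf_nonneg φ))]
    · rw [_root_.abs_of_neg h]
      have hcomp : (∫ φ in (0:ℝ)..(-θ), bf (-φ)) = ∫ φ in θ..(0:ℝ), bf φ := by
        simpa using intervalIntegral.integral_comp_neg (a := 0) (b := -θ) (f := bf)
      have heven : (∫ φ in (0:ℝ)..(-θ), bf (-φ)) = ∫ φ in (0:ℝ)..(-θ), bf φ := by
        apply intervalIntegral.integral_congr
        intro φ _
        exact hbf_even φ
      have hs : (∫ φ in (0:ℝ)..θ, bf φ) = -∫ φ in θ..(0:ℝ), bf φ :=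
        intervalIntegral.integral_symm θ 0
      rw [hs, abs_neg,
        _root_.abs_of_nonneg (intervalIntegral.integral_nonneg h.le (fun φ _ => hbf_nonneg φ)),
        ← hcomp, heven]
  -- remove the absolute value in the exponent
  set bf' : ℝ → ℝ := fun φ => K * R * Real.exp (R ^ 2 * (4 * φ / Real.pi - 1) / 2) with hbf'
  have hbf'_cont : Continuous bf' := by
    apply continuous_const.mul
    apply Real.continuous_exp.comp
    fun_prop
  have hbf'_nonneg : ∀ φ, 0 ≤ bf' φ := by intro φ; rw [hbf']; positivity
  have hstep3 : (∫ φ in (0:ℝ)..|θ|, bf φ) = ∫ φ in (0:ℝ)..|θ|, bf' φ := by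
    apply intervalIntegral.integral_congr
    intro φ hφ
    rw [Set.uIcc_of_le (abs_nonneg θ)] at hφ
    rw [hbf, hbf']
    simp only []
    rw [_root_.abs_of_nonneg hφ.1]
  have hstep4 : (∫ φ in (0:ℝ)..|θ|, bf' φ) ≤ ∫ φ in (0:ℝ)..(Real.pi/4), bf' φ := by
    apply intervalIntegral.integral_mono_interval le_rfl (abs_nonneg θ) hθ
    · filter_upwards with φ using hbf'_nonneg φ
    · exact hbf'_cont.intervalIntegrable 0 (Real.pi/4)
  obtain ⟨D, hD⟩ : ∃ D : ℝ, D = K * R * (Real.pi / (2 * R ^ 2)) := ⟨_, rfl⟩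
  have hstep5 : (∫ φ in (0:ℝ)..(Real.pi/4), bf' φ)
      = D * Real.exp (R ^ 2 * (4 * (Real.pi/4) / Real.pi - 1) / 2)
        - D * Real.exp (R ^ 2 * (4 * (0:ℝ) / Real.pi - 1) / 2) := by
    apply intervalIntegral.integral_eq_sub_of_hasDerivAt
      (f := fun φ : ℝ => D * Real.exp (R ^ 2 * (4 * φ / Real.pi - 1) / 2))
    · intro φ _
      have hinner : HasDerivAt (fun φ : ℝ => R ^ 2 * (4 * φ / Real.pi - 1) / 2)
          (2 * R ^ 2 / Real.pi) φ := by
        have h0 := ((((hasDerivAt_id φ).const_mul (4:ℝ)).div_const Real.pi).sub_const 1)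
        have h1 := (h0.const_mul (R ^ 2)).div_const 2
        refine h1.congr_deriv ?_
        field_simp
        ring
      have := (hinner.exp).const_mul D
      refine this.congr_deriv ?_
      rw [hbf', hD]
      field_simp
    · exact hbf'_cont.intervalIntegrable 0 (Real.pi/4)
  have he0 : R ^ 2 * (4 * (Real.pi/4) / Real.pi - 1) / 2 = 0 := by
    field_simp
    ring
  have hD' : D = K * Real.pi / (2 * R) := by
    rw [hD]
    field_simp
  have hfinal : D * Real.exp (R ^ 2 * (4 * (Real.pi/4) / Real.pi - 1) / 2)
      - D * Real.exp (R ^ 2 * (4 * (0:ℝ) / Real.pi - 1) / 2) ≤ K * Real.pi / R := by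
    rw [he0, Real.exp_zero, mul_one]
    have hDpos : 0 < D := by rw [hD']; positivity
    have hexp_pos : 0 < Real.exp (R ^ 2 * (4 * (0:ℝ) / Real.pi - 1) / 2) := Real.exp_pos _
    have h1 : D - D * Real.exp (R ^ 2 * (4 * (0:ℝ) / Real.pi - 1) / 2) ≤ D := by nlinarith
    apply le_trans h1
    rw [hD']
    rw [div_le_div_iff₀ (by positivity) hR]
    nlinarith [mul_pos (mul_pos hK0 hπ) hR]
  calc ‖∫ φ in (0:ℝ)..θ, gfun c ((R : ℂ) * Complex.exp ((φ : ℂ) * Complex.I)) *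
      ((R : ℂ) * (Complex.exp ((φ : ℂ) * Complex.I) * Complex.I))‖
      ≤ |∫ φ in (0:ℝ)..θ, bf φ| := hstep1
    _ = ∫ φ in (0:ℝ)..|θ|, bf φ := hstep2
    _ = ∫ φ in (0:ℝ)..|θ|, bf' φ := hstep3
    _ ≤ ∫ φ in (0:ℝ)..(Real.pi/4), bf' φ := hstep4
    _ ≤ K * Real.pi / R := by rw [hstep5]; exact hfinal

end Arc

section RealAxis
variable {d : ℕ} (c : Fin (d + 1) → ℝ)

lemma gfun_integrableOn : IntegrableOn (fun y : ℝ => gfun c (y : ℂ)) (Set.Ioi 0) volume := by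
  have hbound : Integrable (fun y : ℝ => (5:ℝ) ^ (d + 1) * Real.exp (-(1/2) * y ^ 2))
      (volume.restrict (Set.Ioi 0)) := by
    exact ((integrable_exp_neg_mul_sq (by norm_num : (0:ℝ) < 1/2)).const_mul _).restrict
  apply Integrable.mono' hbound
  · exact ((gfun_continuous c).comp (by fun_prop)).aestronglyMeasurable
  · filter_upwards with y
    have hre : (((y : ℂ)) ^ 2).re = y ^ 2 := by
      have : ((y : ℂ)) ^ 2 = ((y ^ 2 : ℝ) : ℂ) := by push_cast; ring
      rw [this, Complex.ofReal_re]
    have := gfun_norm_le c (x := (y : ℂ)) (by rw [hre]; positivity)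
    rw [hre] at this
    calc ‖gfun c (y : ℂ)‖ ≤ 5 ^ (d + 1) * Real.exp (-y ^ 2 / 2) := this
      _ = 5 ^ (d + 1) * Real.exp (-(1/2) * y ^ 2) := by ring_nf

lemma gfun_tendsto_real :
    Tendsto (fun B : ℝ => ∫ y in (0:ℝ)..B, gfun c (y : ℂ)) atTop
      (nhds (∫ y in Set.Ioi (0:ℝ), gfun c (y : ℂ))) :=
  intervalIntegral_tendsto_integral_Ioi 0 (gfun_integrableOn c) tendsto_id

lemma Fprim_tendsto_real :
    Tendsto (fun B : ℝ => Fprim c (B : ℂ) - Fprim c 0) atTop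
      (nhds (∫ y in Set.Ioi (0:ℝ), gfun c (y : ℂ))) := by
  have heq : ∀ B : ℝ, Fprim c (B : ℂ) - Fprim c 0 = ∫ y in (0:ℝ)..B, gfun c (y : ℂ) := by
    intro B
    have h1 := integral_ray c 1 B
    rw [one_mul] at h1
    rw [← h1]
    apply intervalIntegral.integral_congr
    intro y _
    simp
  simp only [heq]
  exact gfun_tendsto_real c

end RealAxis

/-- Rotating the ray of integration: for real `z > 0`, the improper integral
`∫₀^{ω∞} ∏_j Φ(μ_j √z x) e^{−x²/2} dx` has the same value for every `ω ≠ 0` with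
`|arg ω| ≤ π/4`, namely the real-axis integral. -/
theorem rotate_ray_of_integration
    (d : ℕ) (μ : Fin (d + 1) → ℝ) (hμ : ∀ j, μ j ≠ 0) (z : ℝ) (hz : 0 < z) :
    ∀ ω : ℂ, ω ≠ 0 → |Complex.arg ω| ≤ Real.pi / 4 →
      Tendsto
        (fun B : ℝ => ∫ y in (0:ℝ)..B,
          (∏ j, Phi ((μ j : ℂ) * (Real.sqrt z : ℂ) * ω * (y : ℂ))) *
            Complex.exp (-ω ^ 2 * (y : ℂ) ^ 2 / 2) * ω)
        atTop
        (nhds (∫ y in Set.Ioi (0 : ℝ),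
          (∏ j, Phi ((μ j : ℂ) * (Real.sqrt z : ℂ) * (y : ℂ))) *
            Complex.exp (-(y : ℂ) ^ 2 / 2))) := by
  intro ω hω harg
  obtain ⟨c, hc⟩ : ∃ c : Fin (d + 1) → ℝ, c = fun j => μ j * Real.sqrt z := ⟨_, rfl⟩
  have hcast : ∀ (j : Fin (d + 1)) (w : ℂ), ((c j : ℝ) : ℂ) * w
      = (μ j : ℂ) * (Real.sqrt z : ℂ) * w := by
    intro j w
    rw [hc]
    push_cast
    ring
  have hrw1 : ∀ B : ℝ, (∫ y in (0:ℝ)..B,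
      (∏ j, Phi ((μ j : ℂ) * (Real.sqrt z : ℂ) * ω * (y : ℂ))) *
        Complex.exp (-ω ^ 2 * (y : ℂ) ^ 2 / 2) * ω)
      = Fprim c (ω * (B : ℂ)) - Fprim c 0 := by
    intro B
    rw [← integral_ray c ω B]
    apply intervalIntegral.integral_congr
    intro y _
    unfold gfun
    have hP : (∏ j, Phi ((μ j : ℂ) * (Real.sqrt z : ℂ) * ω * (y : ℂ)))
        = ∏ j, Phi (((c j : ℝ) : ℂ) * (ω * (y : ℂ))) := by
      apply Finset.prod_congr rfl
      intro j _
      congr 1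
      rw [hcast]
      ring
    have hE : Complex.exp (-ω ^ 2 * (y : ℂ) ^ 2 / 2) = Complex.exp (-(ω * (y : ℂ)) ^ 2 / 2) := by
      congr 1
      ring
    simp only [hP, hE]
  have hrw2 : (∫ y in Set.Ioi (0 : ℝ),
      (∏ j, Phi ((μ j : ℂ) * (Real.sqrt z : ℂ) * (y : ℂ))) * Complex.exp (-(y : ℂ) ^ 2 / 2))
      = ∫ y in Set.Ioi (0:ℝ), gfun c (y : ℂ) := by
    apply integral_congr_ae
    filter_upwards with y
    unfold gfun
    congr 1
    apply Finset.prod_congr rfl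
    intro j _
    congr 1
    rw [hcast]
  rw [hrw2]
  simp only [hrw1]
  -- decompose ω = a * exp(θ i)
  obtain ⟨a, ha⟩ : ∃ a : ℝ, a = ‖ω‖ := ⟨_, rfl⟩
  have hapos : 0 < a := by rw [ha]; exact norm_pos_iff.mpr hω
  have hωeq : (a : ℂ) * Complex.exp ((Complex.arg ω : ℂ) * Complex.I) = ω := by
    rw [ha]; exact Complex.norm_mul_exp_arg_mul_I ω
  have hmul : Tendsto (fun B : ℝ => a * B) atTop atTop :=
    Tendsto.const_mul_atTop hapos tendsto_id
  have harc0 : Tendsto (fun B : ℝ => Fprim c (ω * (B : ℂ)) - Fprim c ((a * B : ℝ) : ℂ))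
      atTop (nhds 0) := by
    apply squeeze_zero_norm' (a := fun B : ℝ => 5 ^ (d + 1) * Real.pi / (a * B))
    · filter_upwards [eventually_gt_atTop (0:ℝ)] with B hB
      have hRpos : 0 < a * B := mul_pos hapos hB
      have hb := arc_bound c (R := a * B) hRpos harg
      have hωB : ω * (B : ℂ) = ((a * B : ℝ) : ℂ) * Complex.exp ((Complex.arg ω : ℂ) * Complex.I) := by
        conv_lhs => rw [← hωeq]
        rw [Complex.ofReal_mul]
        ring
      rw [hωB]
      exact hb
    · exact Tendsto.div_atTop tendsto_const_nhds hmul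
  have hsecond : Tendsto (fun B : ℝ => Fprim c ((a * B : ℝ) : ℂ) - Fprim c 0)
      atTop (nhds (∫ y in Set.Ioi (0:ℝ), gfun c (y : ℂ))) :=
    (Fprim_tendsto_real c).comp hmul
  have hsum := harc0.add hsecond
  rw [zero_add] at hsum
  have heq : (fun B : ℝ => Fprim c (ω * (B : ℂ)) - Fprim c 0)
      = fun B : ℝ => (Fprim c (ω * (B : ℂ)) - Fprim c ((a * B : ℝ) : ℂ))
        + (Fprim c ((a * B : ℝ) : ℂ) - Fprim c 0) := by
    funext B
    ring
  rw [heq]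
  exact hsum
end
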